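/- arXiv:2002.06281 — 3 statements merged into one kernel-verified Lean document; each statement's English description precedes it below -/
import Mathlib

section
/- (Inf-morphism property) Let J be a finite nonempty index set, let c_j for j ∈ J be value conditions, and let c(t, x) = min_{j ∈ J} c_j(t, x). Then for every (t, x) ∈ ℝ × ℝ, M_c(t, x) = min_{j ∈ J} M_{c_j}(t, x). -/
/-! Adding a real number is an order automorphism of `EReal`, so it commutes with every infimum.
Since `M_c` is an infimum of such translates of values of `c`, the map `c ↦ M_c` commutes with
infima of value conditions; the rest is exchanging the order of infima. -/

/-- The Lax–Hopf solution associated with a value condition `c : ℝ × ℝ → ℝ ∪ {+∞}`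
(modeled with values in `EReal`), velocity set `U` and cost `φ`:
`M_c(t, x) = inf { c(t − T, x + T·u) + T·φ(u) : T ≥ 0, u ∈ U }`. -/
noncomputable def laxHopf (U : Set ℝ) (φ : ℝ → ℝ) (c : ℝ × ℝ → EReal) (t x : ℝ) : EReal :=
  ⨅ (T : ℝ) (_ : 0 ≤ T) (u : ℝ) (_ : u ∈ U), c (t - T, x + T * u) + ((T * φ u : ℝ) : EReal)

theorem EReal.iInf_add_coe {ι : Sort*} (f : ι → EReal) (a : ℝ) :
    (⨅ i, f i) + (a : EReal) = ⨅ i, f i + (a : EReal) := by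
  have sub_le_iff {x y : EReal} : x - a ≤ y ↔ x ≤ y + a :=
    EReal.sub_le_iff_le_add (.inl (EReal.coe_ne_bot a)) (.inl (EReal.coe_ne_top a))
  refine le_antisymm (le_iInf fun i => add_le_add_left (iInf_le f i) _) ?_
  exact sub_le_iff.1 (le_iInf fun i => sub_le_iff.2 (iInf_le _ i))

theorem laxHopf_iInf {ι : Sort*} (U : Set ℝ) (φ : ℝ → ℝ) (c : ι → ℝ × ℝ → EReal) (t x : ℝ) :
    laxHopf U φ (fun p => ⨅ j, c j p) t x = ⨅ j, laxHopf U φ (c j) t x := by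
  simp only [laxHopf, EReal.iInf_add_coe, iInf_comm (ι := ι)]

theorem laxHopf_infMorphism_general (U : Set ℝ) (φ : ℝ → ℝ)
    (J : Type)
    (c : J → ℝ × ℝ → EReal) :
    ∀ t x : ℝ, laxHopf U φ (fun p => ⨅ j, c j p) t x = ⨅ j, laxHopf U φ (c j) t x :=
  laxHopf_iInf U φ c

/-- **Inf-morphism property**: if the value condition `c` is the pointwise minimum of
finitely many value conditions `c_j`, then the Lax–Hopf solution of `c` is the pointwise
minimum of the Lax–Hopf solutions of the `c_j`. -/
theorem laxHopf_infMorphism (U : Set ℝ) (hU : U.Nonempty) (φ : ℝ → ℝ)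
    (J : Type) [Fintype J] [Nonempty J]
    (c : J → ℝ × ℝ → EReal) (hc : ∀ (j : J) (p : ℝ × ℝ), c j p ≠ ⊥) :
    ∀ t x : ℝ, laxHopf U φ (fun p => ⨅ j, c j p) t x = ⨅ j, laxHopf U φ (c j) t x :=
  laxHopf_infMorphism_general U φ J c
end

section
/- (Reduction of the Lax–Hopf infimum for boundary conditions) Fix x_b ∈ ℝ and suppose the value condition c satisfies c(t, x) = +∞ whenever x ≠ x_b. Then for every x > x_b and every t ∈ ℝ, M_c(t, x) = inf { c(t + (x − x_b)/u, x_b) − ((x − x_b)/u)·φ(u) : u ∈ U, u < 0 } (the infimum of the empty set being +∞). -/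
/-!
Since `c` is `+∞` off the line `x = x_b`, only the characteristics through `(t, x)` that reach
that line contribute to the infimum. For `x > x_b`, the pair `(T, u)` with `T ≥ 0` reaches it
exactly when `u < 0` and `T = -(x - x_b)/u`, so the double infimum over `(T, u)` collapses to a
single infimum over the negative velocities.
-/

theorem laxHopf_le {U : Set ℝ} {φ : ℝ → ℝ} {c : ℝ × ℝ → EReal} {t x T u : ℝ}
    (hT : 0 ≤ T) (hu : u ∈ U) :
    laxHopf U φ c t x ≤ c (t - T, x + T * u) + ((T * φ u : ℝ) : EReal) :=
  iInf₂_le_of_le T hT (iInf₂_le u hu)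

theorem le_laxHopf {U : Set ℝ} {φ : ℝ → ℝ} {c : ℝ × ℝ → EReal} {t x : ℝ} {b : EReal}
    (h : ∀ T, 0 ≤ T → ∀ u ∈ U, b ≤ c (t - T, x + T * u) + ((T * φ u : ℝ) : EReal)) :
    b ≤ laxHopf U φ c t x :=
  le_iInf₂ fun T hT => le_iInf₂ (h T hT)

theorem nonneg_and_add_mul_eq_iff {x xb T u : ℝ} (hx : xb < x) :
    (0 ≤ T ∧ x + T * u = xb) ↔ (u < 0 ∧ T = -((x - xb) / u)) := by
  constructor
  · rintro ⟨hT, hhit⟩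
    have hTu : T * u = -(x - xb) := by linarith
    have hu : u < 0 := neg_of_mul_neg_right (by linarith) hT
    exact ⟨hu, by rwa [← neg_div, eq_div_iff hu.ne]⟩
  · rintro ⟨hu, rfl⟩
    refine ⟨?_, ?_⟩
    · exact neg_nonneg.mpr (div_nonpos_of_nonneg_of_nonpos (by linarith) hu.le)
    · rw [neg_mul, div_mul_cancel₀ _ hu.ne]
      ring

theorem laxHopf_boundary_reduction_general (U : Set ℝ) (φ : ℝ → ℝ) (xb : ℝ)
    (c : ℝ × ℝ → EReal)
    (hc : ∀ t x : ℝ, x ≠ xb → c (t, x) = ⊤) :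
    ∀ x : ℝ, xb < x → ∀ t : ℝ,
      laxHopf U φ c t x =
        ⨅ (u : ℝ) (_ : u ∈ U) (_ : u < 0),
          c (t + (x - xb) / u, xb) + (((-((x - xb) / u * φ u)) : ℝ) : EReal) := by
  intro x hx t
  have cost_eq : ∀ u, u < 0 →
      c (t - -((x - xb) / u), x + -((x - xb) / u) * u) + ((-((x - xb) / u) * φ u : ℝ) : EReal) =
        c (t + (x - xb) / u, xb) + (((-((x - xb) / u * φ u)) : ℝ) : EReal) := fun u hu => by
    rw [((nonneg_and_add_mul_eq_iff hx).mpr ⟨hu, rfl⟩).2, sub_neg_eq_add, neg_mul]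
  apply le_antisymm
  · refine le_iInf₂ fun u hu => le_iInf fun hu0 => ?_
    have hT := ((nonneg_and_add_mul_eq_iff hx).mpr ⟨hu0, rfl⟩).1
    exact (laxHopf_le hT hu).trans_eq (cost_eq u hu0)
  · refine le_laxHopf fun T hT u hu => ?_
    by_cases hhit : x + T * u = xb
    · obtain ⟨hu0, rfl⟩ := (nonneg_and_add_mul_eq_iff hx).mp ⟨hT, hhit⟩
      exact iInf₂_le_of_le u hu ((iInf_le _ hu0).trans_eq (cost_eq u hu0).symm)
    · rw [hc _ _ hhit, EReal.top_add_of_ne_bot (EReal.coe_ne_bot _)]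
      exact le_top

/-- **Reduction of the Lax–Hopf infimum for boundary conditions**: if the value condition `c`
is `+∞` off the line `x = x_b`, then for every `x > x_b` and every `t`,
`M_c(t, x) = inf { c(t + (x − x_b)/u, x_b) − ((x − x_b)/u)·φ(u) : u ∈ U, u < 0 }`
(the infimum of the empty set being `+∞`). -/
theorem laxHopf_boundary_reduction (U : Set ℝ) (hU : U.Nonempty) (φ : ℝ → ℝ) (xb : ℝ)
    (c : ℝ × ℝ → EReal) (hbot : ∀ p : ℝ × ℝ, c p ≠ ⊥)
    (hc : ∀ t x : ℝ, x ≠ xb → c (t, x) = ⊤) :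
    ∀ x : ℝ, xb < x → ∀ t : ℝ,
      laxHopf U φ c t x =
        ⨅ (u : ℝ) (_ : u ∈ U) (_ : u < 0),
          c (t + (x - xb) / u, xb) + (((-((x - xb) / u * φ u)) : ℝ) : EReal) :=
  laxHopf_boundary_reduction_general U φ xb c hc
end

section
/- (Equivalence of the distributionally robust chance constraint and a second-order cone constraint) Let x ∈ ℝ^k and α ∈ (0, 1/2), and set κ_α = √((1 − α)/α). Then inf_{μ ∈ 𝒫} μ{ ξ ∈ ℝ^k : ⟨ξ, x⟩ ≤ 0 } ≥ 1 − α holds if and only if κ_α·√(⟨x, Γ x⟩) + ⟨d̂, x⟩ ≤ 0. -/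
/-!
That the cone constraint suffices is Cantelli's one-sided Chebyshev inequality for `⟨ξ, x⟩`, whose
mean `⟨d̂, x⟩` and variance `σ² = ⟨x, Γ x⟩` are the same for every `μ ∈ 𝒫`. For necessity, if
`κ_α σ + ⟨d̂, x⟩ > 0`, pick `0 < s < κ_α` with `s σ + ⟨d̂, x⟩ > 0` and let `Z` take the values `s`
and `-1/s` with probabilities `1/(1+s²)` and `s²/(1+s²)`. Then `ξ = d̂ + (Z/σ) Γ x + W` lies in
`𝒫` when `W` is independent centered noise, orthogonal to `x`, with covariance
`Γ - (Γ x)(Γ x)ᵀ/σ²`; such a `W` is uniform on the `±√k` multiples of the rows of any `B` with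
`Bᵀ B` equal to that matrix. As `⟨ξ, x⟩ = ⟨d̂, x⟩ + σ Z`, the chance constraint holds with
probability at most `s²/(1+s²) < 1 - α`.
-/

open MeasureTheory ProbabilityTheory Matrix

section DiscreteMeasure

variable {E F ι : Type*} [MeasurableSpace E] [Fintype ι] {w : ι → ℝ} {q : ι → E}

noncomputable def discreteMeasure (w : ι → ℝ) (q : ι → E) : Measure E :=
  ∑ i, ENNReal.ofReal (w i) • Measure.dirac (q i)

lemma map_discreteMeasure {E' : Type*} [MeasurableSpace E'] {f : E → E'} (hf : Measurable f) :
    (discreteMeasure w q).map f = discreteMeasure w (f ∘ q) := by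
  rw [discreteMeasure, ← Measure.mapₗ_apply_of_measurable hf, map_sum]
  simp only [Measure.mapₗ_apply_of_measurable hf, Measure.map_smul, Measure.map_dirac' hf]
  rfl

lemma discreteMeasure_prod_comp_fst {κ : Type*} [Fintype κ] {v : κ → ℝ} (hw : ∀ i, 0 ≤ w i)
    (hv : ∀ j, 0 ≤ v j) (hv1 : ∑ j, v j = 1) (f : ι → E) :
    discreteMeasure (fun y : ι × κ => w y.1 * v y.2) (f ∘ Prod.fst) = discreteMeasure w f := by
  simp only [discreteMeasure, Fintype.sum_prod_type, Function.comp_apply,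
    ENNReal.ofReal_mul (hw _), mul_smul, ← Finset.smul_sum, ← Finset.sum_smul,
    ← ENNReal.ofReal_sum_of_nonneg (fun j _ => hv j), hv1, ENNReal.ofReal_one, one_smul]

lemma isProbabilityMeasure_discreteMeasure (hw : ∀ i, 0 ≤ w i) (hw1 : ∑ i, w i = 1) :
    IsProbabilityMeasure (discreteMeasure w q) := by
  constructor
  simp [discreteMeasure, ← ENNReal.ofReal_sum_of_nonneg (fun i _ => hw i), hw1]

variable [MeasurableSingletonClass E]

lemma discreteMeasure_apply (s : Set E) :
    discreteMeasure w q s = ∑ i, s.indicator (fun _ => ENNReal.ofReal (w i)) (q i) := by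
  simp [discreteMeasure, Measure.dirac_apply, Set.indicator]

variable [NormedAddCommGroup F]

lemma integrable_discreteMeasure (f : E → F) : Integrable f (discreteMeasure w q) := by
  simp only [discreteMeasure, integrable_finsetSum_measure]
  exact fun i _ => (integrable_dirac enorm_lt_top).smul_measure ENNReal.ofReal_ne_top

lemma integral_discreteMeasure [NormedSpace ℝ F] [CompleteSpace F] (hw : ∀ i, 0 ≤ w i)
    (f : E → F) :
    ∫ ξ, f ξ ∂(discreteMeasure w q) = ∑ i, w i • f (q i) := by
  rw [discreteMeasure, integral_finsetSum_measure fun i _ => ?_]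
  · simp [integral_smul_measure, integral_dirac, hw]
  · exact (integrable_dirac enorm_lt_top).smul_measure ENNReal.ofReal_ne_top

end DiscreteMeasure

section AmbiguitySet

variable {n : Type*}

/-- `μ` lies in the ambiguity set `𝒫` of mean `d` and covariance `Γ`. -/
structure HasMeanCovariance (μ : Measure (n → ℝ)) (d : n → ℝ) (Γ : Matrix n n ℝ) : Prop where
  isProbabilityMeasure : IsProbabilityMeasure μ
  integrable : ∀ i, Integrable (fun ξ => ξ i) μ
  integrable_mul : ∀ i j, Integrable (fun ξ => ξ i * ξ j) μ
  integral_eq : ∀ i, ∫ ξ, ξ i ∂μ = d i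
  integral_mul_eq : ∀ i j, ∫ ξ, (ξ i - d i) * (ξ j - d j) ∂μ = Γ i j

variable {μ : Measure (n → ℝ)} {d : n → ℝ} {Γ : Matrix n n ℝ}

lemma hasMeanCovariance_discreteMeasure [Fintype n] {ι : Type*} [Fintype ι] {w : ι → ℝ}
    {q : ι → n → ℝ} (hw : ∀ i, 0 ≤ w i) (hw1 : ∑ i, w i = 1) (hmean : ∀ j, ∑ i, w i * q i j = d j)
    (hcov : ∀ j l, ∑ i, w i * ((q i j - d j) * (q i l - d l)) = Γ j l) :
    HasMeanCovariance (discreteMeasure w q) d Γ where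
  isProbabilityMeasure := isProbabilityMeasure_discreteMeasure hw hw1
  integrable _ := integrable_discreteMeasure _
  integrable_mul _ _ := integrable_discreteMeasure _
  integral_eq j := by simpa [integral_discreteMeasure hw] using hmean j
  integral_mul_eq j l := by simpa [integral_discreteMeasure hw] using hcov j l

namespace HasMeanCovariance

variable (hμ : HasMeanCovariance μ d Γ) (x : n → ℝ)
include hμ

lemma memLp_two (i : n) : MemLp (fun ξ => ξ i) 2 μ :=
  (memLp_two_iff_integrable_sq (measurable_pi_apply i).aestronglyMeasurable).2 <| by
    simpa [sq] using hμ.integrable_mul i i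

lemma covariance_eq (i j : n) : cov[fun ξ => ξ i, fun ξ => ξ j; μ] = Γ i j := by
  rw [covariance, hμ.integral_eq i, hμ.integral_eq j, hμ.integral_mul_eq]

variable [Fintype n]

lemma memLp_two_dotProduct : MemLp (· ⬝ᵥ x) 2 μ :=
  memLp_finsetSum _ fun i _ => (hμ.memLp_two i).mul_const (x i)

lemma integral_dotProduct : ∫ ξ, ξ ⬝ᵥ x ∂μ = d ⬝ᵥ x := by
  simp only [dotProduct]
  rw [integral_finsetSum _ fun i _ => (hμ.integrable i).mul_const (x i)]
  simp [integral_mul_const, hμ.integral_eq]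

lemma variance_dotProduct : Var[(· ⬝ᵥ x); μ] = x ⬝ᵥ Γ *ᵥ x := by
  have := hμ.isProbabilityMeasure
  rw [show (· ⬝ᵥ x) = fun ξ : n → ℝ => ∑ i, ξ i * x i from rfl,
    variance_fun_sum fun i => (hμ.memLp_two i).mul_const (x i)]
  simp only [covariance_mul_const_left, covariance_mul_const_right, hμ.covariance_eq, mulVec,
    dotProduct, Finset.mul_sum]
  exact Finset.sum_congr rfl fun i _ => Finset.sum_congr rfl fun j _ => by ring

end HasMeanCovariance

end AmbiguitySet

section Cantelli

variable {Ω : Type*} [MeasurableSpace Ω] {μ : Measure Ω} [IsProbabilityMeasure μ] {X : Ω → ℝ}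

/-- **Cantelli's inequality**, the one-sided Chebyshev inequality. -/
theorem meas_ge_le_variance_div_variance_add_sq (hX : MemLp X 2 μ) {t : ℝ} (ht : 0 < t) :
    μ {ω | μ[X] + t ≤ X ω} ≤ ENNReal.ofReal (Var[X; μ] / (Var[X; μ] + t ^ 2)) := by
  set v := Var[X; μ]
  have hv : 0 ≤ v := variance_nonneg X μ
  -- Markov's inequality for `(X - μ[X] + u)²` is sharpest at the shift `u = v / t`
  set u := v / t
  set Y := fun ω => X ω + (u - μ[X])
  have hY : MemLp Y 2 μ := hX.add (memLp_const _)
  have hY_int : ∫ ω, Y ω ^ 2 ∂μ = v + u ^ 2 := by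
    have hmean : ∫ ω, Y ω ∂μ = u := by
      simp [Y, integral_add (hX.integrable one_le_two) (integrable_const _)]
    have h := variance_eq_sub hY
    rw [variance_add_const hX.aestronglyMeasurable, hmean] at h
    simp only [Pi.pow_apply] at h
    linarith
  have hsub : {ω | μ[X] + t ≤ X ω} ⊆ {ω | (t + u) ^ 2 ≤ Y ω ^ 2} :=
    fun ω (hω : μ[X] + t ≤ X ω) =>
      pow_le_pow_left₀ (by positivity) (show t + u ≤ Y ω by simp only [Y]; linarith) 2
  have hmarkov := mul_meas_ge_le_integral_of_nonneg (ae_of_all μ fun ω => sq_nonneg (Y ω))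
    hY.integrable_sq ((t + u) ^ 2)
  rw [hY_int] at hmarkov
  rw [ENNReal.le_ofReal_iff_toReal_le (measure_ne_top _ _) (by positivity), ← measureReal_def]
  calc μ.real {ω | μ[X] + t ≤ X ω} ≤ μ.real {ω | (t + u) ^ 2 ≤ Y ω ^ 2} := measureReal_mono hsub
    _ ≤ (v + u ^ 2) / (t + u) ^ 2 := by rw [le_div_iff₀ (by positivity)]; linarith
    _ = v / (v + t ^ 2) := by
      rw [div_eq_div_iff (by positivity) (by positivity)]
      simp only [u]
      field_simp
      ring

theorem ofReal_one_sub_le_meas_nonpos (hX : MemLp X 2 μ) {α : ℝ} (hα0 : 0 < α) (hα1 : α < 1)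
    (h : √((1 - α) / α) * √(Var[X; μ]) + μ[X] ≤ 0) :
    ENNReal.ofReal (1 - α) ≤ μ {ω | X ω ≤ 0} := by
  set v := Var[X; μ]
  have hv : 0 ≤ v := variance_nonneg X μ
  have hκ : 0 < √((1 - α) / α) := Real.sqrt_pos.2 (div_pos (by linarith) hα0)
  have hm : μ[X] ≤ 0 := by nlinarith [Real.sqrt_nonneg v]
  have hpos : μ {ω | 0 < X ω} ≤ ENNReal.ofReal α := by
    rcases hm.lt_or_eq with hm | hm
    · have hsq : (1 - α) / α * v ≤ μ[X] ^ 2 := by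
        have := pow_le_pow_left₀ (by positivity)
          (show √((1 - α) / α) * √v ≤ -μ[X] by linarith) 2
        rwa [mul_pow, Real.sq_sqrt (by positivity), Real.sq_sqrt hv, neg_sq] at this
      calc μ {ω | 0 < X ω} ≤ μ {ω | μ[X] + -μ[X] ≤ X ω} :=
            measure_mono fun ω (hω : 0 < X ω) => show μ[X] + -μ[X] ≤ X ω by linarith
        _ ≤ ENNReal.ofReal (v / (v + (-μ[X]) ^ 2)) :=
            meas_ge_le_variance_div_variance_add_sq hX (neg_pos.2 hm)
        _ ≤ ENNReal.ofReal α := by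
            refine ENNReal.ofReal_le_ofReal (div_le_of_le_mul₀ (by positivity) hα0.le ?_)
            rw [div_mul_eq_mul_div, div_le_iff₀ hα0] at hsq
            nlinarith
    · have hv0 : v = 0 := by
        have : √v = 0 := by nlinarith [Real.sqrt_nonneg v]
        rwa [Real.sqrt_eq_zero hv] at this
      have hX0 : ∀ᵐ ω ∂μ, X ω ≤ 0 := by
        filter_upwards [ae_eq_integral_of_variance_eq_zero hX hv0] with ω hω
        rw [hω, hm]
      simp only [ae_iff, not_le] at hX0
      simp [hX0]
  rw [ENNReal.ofReal_sub _ hα0.le, ENNReal.ofReal_one, tsub_le_iff_right, ← measure_univ (μ := μ)]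
  calc μ Set.univ ≤ μ ({ω | X ω ≤ 0} ∪ {ω | 0 < X ω}) :=
        measure_mono fun ω _ => le_or_gt (X ω) 0
    _ ≤ μ {ω | X ω ≤ 0} + ENNReal.ofReal α := (measure_union_le _ _).trans (by gcongr)

end Cantelli

namespace Matrix

variable {n : Type*} [Fintype n] {Γ : Matrix n n ℝ}

open scoped MatrixOrder in
lemma PosSemidef.exists_transpose_mul_self_eq (hΓ : Γ.PosSemidef) :
    ∃ B : Matrix n n ℝ, Bᵀ * B = Γ := by
  classical
  have hS := nonneg_iff_posSemidef.1 (CFC.sqrt_nonneg Γ)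
  refine ⟨CFC.sqrt Γ, ?_⟩
  rw [← conjTranspose_eq_transpose_of_trivial, hS.isHermitian.eq]
  exact CFC.sqrt_mul_sqrt_self Γ (nonneg_iff_posSemidef.2 hΓ)

lemma PosSemidef.exists_transpose_mul_self_eq_sub_and_mulVec_eq_zero (hΓ : Γ.PosSemidef)
    (x : n → ℝ) :
    ∃ B : Matrix n n ℝ, Bᵀ * B = Γ - (x ⬝ᵥ Γ *ᵥ x)⁻¹ • vecMulVec (Γ *ᵥ x) (Γ *ᵥ x) ∧
      B *ᵥ x = 0 := by
  obtain ⟨B₀, rfl⟩ := hΓ.exists_transpose_mul_self_eq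
  set y := B₀ *ᵥ x
  set g := (B₀ᵀ * B₀) *ᵥ x
  set q := x ⬝ᵥ (B₀ᵀ * B₀) *ᵥ x
  have hg : B₀ᵀ *ᵥ y = g := mulVec_mulVec _ _ _
  have hgx : g ⬝ᵥ x = q := dotProduct_comm _ _
  have hyy : y ⬝ᵥ y = q := by
    rw [dotProduct_mulVec, ← mulVec_transpose, hg, hgx]
  -- subtract from each row of `B₀` the multiple of `g` that makes it orthogonal to `x`
  refine ⟨B₀ - q⁻¹ • vecMulVec y g, ?_, ?_⟩
  · have hq : q⁻¹ * (q⁻¹ * q) = q⁻¹ := by simpa [mul_assoc] using mul_self_mul_inv q⁻¹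
    simp only [transpose_sub, transpose_smul, transpose_vecMulVec, sub_mul, mul_sub,
      Matrix.smul_mul, Matrix.mul_smul, mul_vecMulVec, vecMulVec_mul,
      smul_mulVec, vecMulVec_mulVec, op_smul_eq_smul, smul_vecMulVec, hg, ← mulVec_transpose,
      hyy, smul_smul, hq, sub_self, sub_zero]
  · rw [sub_mulVec, smul_mulVec, vecMulVec_mulVec, hgx, op_smul_eq_smul, smul_smul]
    change y - (q⁻¹ * q) • y = 0
    rcases eq_or_ne q 0 with hq | hq
    · simp [dotProduct_self_eq_zero.1 (hyy.trans hq)]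
    · rw [inv_mul_cancel₀ hq, one_smul, sub_self]

end Matrix

section IndependentSum

lemma sum_prod_mul_mul_add {ι κ : Type*} [Fintype ι] [Fintype κ] {p : ι → ℝ} {v : κ → ℝ}
    {α : ι → ℝ} {β : κ → ℝ} (hv1 : ∑ k, v k = 1) (hβ : ∑ k, v k * β k = 0) :
    ∑ y : ι × κ, p y.1 * v y.2 * (α y.1 + β y.2) = ∑ i, p i * α i := by
  have h : ∀ i k, p i * v k * (α i + β k) = p i * α i * v k + p i * (v k * β k) :=
    fun i k => by ring
  simp [Fintype.sum_prod_type, h, Finset.sum_add_distrib, ← Finset.mul_sum, hv1, hβ]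

lemma sum_prod_mul_mul_add_mul_add {ι κ : Type*} [Fintype ι] [Fintype κ] {p : ι → ℝ}
    {v : κ → ℝ} {α α' : ι → ℝ} {β β' : κ → ℝ} (hp1 : ∑ i, p i = 1) (hv1 : ∑ k, v k = 1)
    (hβ : ∑ k, v k * β k = 0) (hβ' : ∑ k, v k * β' k = 0) :
    ∑ y : ι × κ, p y.1 * v y.2 * ((α y.1 + β y.2) * (α' y.1 + β' y.2)) =
      ∑ i, p i * (α i * α' i) + ∑ k, v k * (β k * β' k) := by
  have h : ∀ i k, p i * v k * ((α i + β k) * (α' i + β' k)) = p i * (α i * α' i) * v k +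
      p i * α i * (v k * β' k) + p i * α' i * (v k * β k) + p i * (v k * (β k * β' k)) :=
    fun i k => by ring
  simp [Fintype.sum_prod_type, h, Finset.sum_add_distrib, ← Finset.mul_sum, ← Finset.sum_mul,
    hv1, hβ, hβ', hp1]

variable {n : Type*} [Fintype n] {d : n → ℝ} {Γ : Matrix n n ℝ}

lemma hasMeanCovariance_discreteMeasure_add {ι κ : Type*} [Fintype ι] [Fintype κ]
    {p : ι → ℝ} {u : ι → n → ℝ} {v : κ → ℝ} {e : κ → n → ℝ} (hp : ∀ i, 0 ≤ p i)
    (hp1 : ∑ i, p i = 1) (hv : ∀ k, 0 ≤ v k) (hv1 : ∑ k, v k = 1)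
    (hu : ∀ j, ∑ i, p i * u i j = d j) (he : ∀ j, ∑ k, v k * e k j = 0)
    (hcov : ∀ j l, ∑ i, p i * ((u i j - d j) * (u i l - d l)) + ∑ k, v k * (e k j * e k l) =
      Γ j l) :
    HasMeanCovariance
      (discreteMeasure (fun y : ι × κ => p y.1 * v y.2) (fun y => u y.1 + e y.2)) d Γ := by
  refine hasMeanCovariance_discreteMeasure (fun y => mul_nonneg (hp _) (hv _)) ?_ (fun j => ?_)
    (fun j l => ?_)
  · simp [Fintype.sum_prod_type, ← Finset.mul_sum, hv1, hp1]
  · simpa [sum_prod_mul_mul_add (p := p) (α := (u · j)) hv1 (he j)] using hu j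
  · simp only [Pi.add_apply, add_sub_right_comm _ (e _ _)]
    rw [sum_prod_mul_mul_add_mul_add (α := (u · j - d j)) (α' := (u · l - d l)) hp1 hv1 (he j)
      (he l), hcov]

end IndependentSum

section SignedRows

variable {m n : Type*} [Fintype m] (B : Matrix m n ℝ)

noncomputable def signedRows (k : m × Bool) : n → ℝ :=
  (if k.2 then √(Fintype.card m) else -√(Fintype.card m)) • B k.1

lemma sum_signedRows_apply (j : n) : ∑ k, signedRows B k j = 0 := by
  simp [signedRows, Fintype.sum_prod_type]

lemma sum_signedRows_mul_signedRows [Fintype n] (j l : n) :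
    ∑ k, signedRows B k j * signedRows B k l = 2 * Fintype.card m * (Bᵀ * B) j l := by
  have hc : √(Fintype.card m : ℝ) ^ 2 = Fintype.card m := Real.sq_sqrt (Nat.cast_nonneg _)
  simp only [signedRows, Fintype.sum_prod_type, Fintype.sum_bool, Pi.smul_apply, smul_eq_mul,
    mul_apply, transpose_apply, Finset.mul_sum]
  refine Finset.sum_congr rfl fun r _ => ?_
  simp only [if_true, Bool.false_eq_true, if_false]
  linear_combination 2 * B r j * B r l * hc

lemma signedRows_dotProduct [Fintype n] {x : n → ℝ} (hx : B *ᵥ x = 0) (k : m × Bool) :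
    signedRows B k ⬝ᵥ x = 0 := by
  rw [signedRows, smul_dotProduct, show B k.1 ⬝ᵥ x = 0 from congrFun hx k.1, smul_zero]

end SignedRows

theorem exists_hasMeanCovariance_map_dotProduct_eq {n : Type*} [Fintype n] [Nonempty n]
    {Γ : Matrix n n ℝ} (hΓ : Γ.PosSemidef) (d x : n → ℝ) {ι : Type*} [Fintype ι]
    {p a : ι → ℝ} (hp : ∀ i, 0 ≤ p i) (hp1 : ∑ i, p i = 1)
    (ha0 : ∑ i, p i * a i = 0) (ha1 : ∑ i, p i * a i ^ 2 = 1) :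
    ∃ μ, HasMeanCovariance μ d Γ ∧
      μ.map (· ⬝ᵥ x) = discreteMeasure p (fun i => d ⬝ᵥ x + √(x ⬝ᵥ Γ *ᵥ x) * a i) := by
  obtain ⟨B, hB, hBx⟩ := hΓ.exists_transpose_mul_self_eq_sub_and_mulVec_eq_zero x
  set σ := √(x ⬝ᵥ Γ *ᵥ x)
  set g := Γ *ᵥ x
  have hσ2 : σ ^ 2 = x ⬝ᵥ g := Real.sq_sqrt (hΓ.dotProduct_mulVec_nonneg x)
  have hN : 0 < (Fintype.card n : ℝ) := by simp [Fintype.card_pos]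
  -- `ξ = u_Z + W`: the atoms `u i` carry the law of `⟨ξ, x⟩`, and the independent noise `W`,
  -- orthogonal to `x`, supplies the remaining covariance `Bᵀ * B`
  set u : ι → n → ℝ := fun i => d + (a i / σ) • g
  set v : n × Bool → ℝ := fun _ => (2 * Fintype.card n)⁻¹
  have hv1 : ∑ k, v k = 1 := by
    simp only [v, Finset.sum_const, Finset.card_univ, Fintype.card_prod, Fintype.card_bool,
      nsmul_eq_mul, Nat.cast_mul, Nat.cast_ofNat]
    field_simp
  have hu : ∀ i, u i ⬝ᵥ x = d ⬝ᵥ x + σ * a i := fun i => by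
    suffices a i / σ * σ ^ 2 = σ * a i by simpa [u, add_dotProduct, dotProduct_comm g, ← hσ2]
    rcases eq_or_ne σ 0 with h | h
    · simp [h]
    · field_simp
  refine ⟨_, hasMeanCovariance_discreteMeasure_add (u := u) (e := signedRows B) hp hp1
    (fun _ => by positivity) hv1 (fun j => ?_) (fun j => ?_) (fun j l => ?_), ?_⟩
  · have h : ∀ i, p i * u i j = p i * d j + p i * a i * (g j / σ) := fun i => by
      simp only [u, Pi.add_apply, Pi.smul_apply, smul_eq_mul]; ring
    simp [h, Finset.sum_add_distrib, ← Finset.sum_mul, hp1, ha0]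
  · simp [v, ← Finset.mul_sum, sum_signedRows_apply]
  · have h : ∀ i, p i * ((u i j - d j) * (u i l - d l)) = p i * a i ^ 2 * (g j * g l / σ ^ 2) :=
      fun i => by simp only [u, Pi.add_apply, Pi.smul_apply, smul_eq_mul]; ring
    simp only [h, ← Finset.sum_mul, ha1, v, ← Finset.mul_sum, sum_signedRows_mul_signedRows, hB,
      hσ2, Matrix.sub_apply, Matrix.smul_apply, vecMulVec_apply, smul_eq_mul]
    field_simp
    ring
  · have hq : (· ⬝ᵥ x) ∘ (fun y : ι × (n × Bool) => u y.1 + signedRows B y.2) =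
        (fun i => d ⬝ᵥ x + σ * a i) ∘ Prod.fst := by
      ext y
      simp [add_dotProduct, hu, signedRows_dotProduct B hBx]
    rw [map_discreteMeasure (by fun_prop), hq,
      discreteMeasure_prod_comp_fst hp (fun _ => by positivity) hv1]

open Filter Topology in
theorem exists_hasMeanCovariance_meas_dotProduct_nonpos_lt {n : Type*} [Fintype n] [Nonempty n]
    {Γ : Matrix n n ℝ} (hΓ : Γ.PosSemidef) (d x : n → ℝ) {α : ℝ} (hα0 : 0 < α) (hα1 : α < 1)
    (h : 0 < √((1 - α) / α) * √(x ⬝ᵥ Γ *ᵥ x) + d ⬝ᵥ x) :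
    ∃ μ, HasMeanCovariance μ d Γ ∧ μ {ξ | ξ ⬝ᵥ x ≤ 0} < ENNReal.ofReal (1 - α) := by
  set κ := √((1 - α) / α)
  set σ := √(x ⬝ᵥ Γ *ᵥ x)
  have hκ2 : κ ^ 2 = (1 - α) / α := Real.sq_sqrt (div_pos (by linarith) hα0).le
  have hκ : 0 < κ := Real.sqrt_pos.2 (div_pos (by linarith) hα0)
  have hlt : ∀ᶠ s in 𝓝[<] κ, s ∈ Set.Ioo 0 κ := Ioo_mem_nhdsLT hκ
  have hpos : ∀ᶠ s in 𝓝[<] κ, 0 < s * σ + d ⬝ᵥ x :=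
    ((by fun_prop : Continuous fun s => s * σ + d ⬝ᵥ x).tendsto κ
      |>.mono_left nhdsWithin_le_nhds).eventually_const_lt h
  obtain ⟨s, ⟨hs0, hsκ⟩, hs⟩ := (hlt.and hpos).exists
  -- the standardized two-point law attaining equality in Cantelli's bound `P(Z ≥ s) ≤ 1 / (1 + s²)`
  set p : Bool → ℝ := fun b => if b then (1 + s ^ 2)⁻¹ else s ^ 2 / (1 + s ^ 2)
  set a : Bool → ℝ := fun b => if b then s else -s⁻¹
  have hp1 : ∑ b, p b = 1 := by
    simp only [Fintype.sum_bool, p, ↓reduceIte, Bool.false_eq_true]; field_simp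
  have ha0 : ∑ b, p b * a b = 0 := by
    simp only [Fintype.sum_bool, p, a, ↓reduceIte, Bool.false_eq_true]; field_simp; ring
  have ha1 : ∑ b, p b * a b ^ 2 = 1 := by
    simp only [Fintype.sum_bool, p, a, ↓reduceIte, Bool.false_eq_true]; field_simp; ring
  obtain ⟨μ, hμ, hmap⟩ :=
    exists_hasMeanCovariance_map_dotProduct_eq hΓ d x (fun b => by positivity) hp1 ha0 ha1
  refine ⟨μ, hμ, ?_⟩
  calc μ {ξ | ξ ⬝ᵥ x ≤ 0} = μ.map (· ⬝ᵥ x) (Set.Iic 0) := by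
        rw [Measure.map_apply (by fun_prop) measurableSet_Iic]; rfl
    _ ≤ ENNReal.ofReal (s ^ 2 / (1 + s ^ 2)) := by
        have hneg : d ⬝ᵥ x + σ * a true ∉ Set.Iic 0 := by
          simp only [a, ↓reduceIte, Set.mem_Iic, not_le]; linarith
        rw [hmap, discreteMeasure_apply, Fintype.sum_bool, Set.indicator_of_notMem hneg, zero_add]
        exact Set.indicator_le_self _ _ _
    _ < ENNReal.ofReal (1 - α) := by
        have hs2 : s ^ 2 < (1 - α) / α := hκ2 ▸ pow_lt_pow_left₀ hsκ hs0.le two_ne_zero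
        rw [lt_div_iff₀ hα0] at hs2
        rw [ENNReal.ofReal_lt_ofReal_iff (by linarith), div_lt_iff₀ (by positivity)]
        linarith

/-- **Equivalence of the distributionally robust chance constraint and a second-order cone
constraint**: with `κ_α = √((1 − α)/α)` and `α ∈ (0, 1/2)`, the worst-case probability bound
`inf_{μ ∈ 𝒫} μ{ξ : ⟨ξ, x⟩ ≤ 0} ≥ 1 − α` over all probability measures `μ` with mean `d̂`
and covariance matrix `Γ` holds if and only if `κ_α·√(⟨x, Γx⟩) + ⟨d̂, x⟩ ≤ 0`. -/
theorem dro_chance_constraint_iff_soc (k : ℕ) (hk : 1 ≤ k) (dhat : Fin k → ℝ)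
    (Γ : Matrix (Fin k) (Fin k) ℝ) (hΓ : Γ.PosSemidef)
    (x : Fin k → ℝ) (α : ℝ) (hα : α ∈ Set.Ioo (0 : ℝ) (1 / 2)) :
    (∀ μ : Measure (Fin k → ℝ), IsProbabilityMeasure μ →
        (∀ i : Fin k, Integrable (fun ξ => ξ i) μ) →
        (∀ i j : Fin k, Integrable (fun ξ => ξ i * ξ j) μ) →
        (∀ i : Fin k, (∫ ξ, ξ i ∂μ) = dhat i) →
        (∀ i j : Fin k, (∫ ξ, (ξ i - dhat i) * (ξ j - dhat j) ∂μ) = Γ i j) →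
        ENNReal.ofReal (1 - α) ≤ μ {ξ : Fin k → ℝ | (∑ i, ξ i * x i) ≤ 0}) ↔
      Real.sqrt ((1 - α) / α) * Real.sqrt (∑ i, ∑ j, x i * Γ i j * x j)
          + (∑ i, dhat i * x i) ≤ 0 := by
  obtain ⟨hα0, hα2⟩ := hα
  have : Nonempty (Fin k) := Fin.pos_iff_nonempty.1 hk
  have hquad : ∑ i, ∑ j, x i * Γ i j * x j = x ⬝ᵥ Γ *ᵥ x := by
    simp [dotProduct, mulVec, Finset.mul_sum, mul_assoc]
  rw [hquad]
  constructor
  · intro H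
    by_contra! h
    obtain ⟨μ, hμ, hlt⟩ :=
      exists_hasMeanCovariance_meas_dotProduct_nonpos_lt hΓ dhat x hα0 (by linarith) h
    exact (H μ hμ.isProbabilityMeasure hμ.integrable hμ.integrable_mul hμ.integral_eq
      hμ.integral_mul_eq).not_gt hlt
  · intro h μ hprob hint hint_mul hmean hcov
    have hμ : HasMeanCovariance μ dhat Γ := ⟨hprob, hint, hint_mul, hmean, hcov⟩
    refine ofReal_one_sub_le_meas_nonpos (hμ.memLp_two_dotProduct x) hα0 (by linarith) ?_
    rwa [hμ.variance_dotProduct, hμ.integral_dotProduct]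
end
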